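/- Let F be a field of prime characteristic p, A an associative unital F-algebra, and e ∈ A with e^{⌊(p+1)/2⌋} = 0. Define Y(t) = Σ_{k=0}^{p-1} (t^k / k!) · e^{k}. Then for each t ∈ F the map x ↦ Y(t) · x · Y(-t) is an F-algebra automorphism of A, and it preserves the commutator bracket: Y(t) · (e*x - x*e) · Y(-t) = (Y(t)·e·Y(-t)) * (Y(t)·x·Y(-t)) - (Y(t)·x·Y(-t)) * (Y(t)·e·Y(-t)) for all x ∈ A. -/

import Mathlib

/-!
Since `(p+1)/2 ≤ p`, we have `e ^ p = 0`. In the product `Y(a) Y(b)` the terms `e ^ (i + j)` with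
`i + j ≥ p` vanish, and as `k!` is invertible for `k < p` the binomial theorem regroups the rest
into `Y(a + b)`. Hence `Y(t)` is a unit with inverse `Y(-t)`; conjugation by a unit is an algebra
automorphism, and algebra homomorphisms preserve commutators.
-/

open Finset

section TruncExp

open scoped Nat

theorem add_pow_div_factorial {F : Type*} [Field F] (a b : F) (n : ℕ)
    (hfac : ∀ k ≤ n, (k ! : F) ≠ 0) :
    (a + b) ^ n / n ! = ∑ k ∈ range (n + 1), a ^ k / k ! * (b ^ (n - k) / (n - k)!) := by
  rw [add_pow, sum_div]
  refine sum_congr rfl fun k hk => ?_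
  have hkn : k ≤ n := Nat.lt_succ_iff.1 (mem_range.1 hk)
  have hchoose : (n.choose k : F) * (k ! : ℕ) * ((n - k)! : ℕ) = (n ! : ℕ) := by
    rw [← Nat.cast_mul, ← Nat.cast_mul, Nat.choose_mul_factorial_mul_factorial hkn]
  field_simp [hfac k hkn, hfac (n - k) (Nat.sub_le n k), hfac n le_rfl]
  rw [← hchoose]
  ring

variable {F A : Type*} [Field F] [Semiring A] [Algebra F A]

noncomputable def truncExp (e : A) (N : ℕ) (s : F) : A :=
  ∑ k ∈ range N, (s ^ k / k !) • e ^ k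

theorem truncExp_zero (e : A) {N : ℕ} (hN : 0 < N) : truncExp e N (0 : F) = 1 := by
  obtain ⟨N, rfl⟩ := Nat.exists_eq_add_of_lt hN
  simp [truncExp, sum_range_succ']

theorem truncExp_mul_truncExp {e : A} {N : ℕ} (he : e ^ N = 0)
    (hfac : ∀ k < N, (k ! : F) ≠ 0) (a b : F) :
    truncExp e N a * truncExp e N b = truncExp e N (a + b) := by
  set f : ℕ → ℕ → A := fun i j => (a ^ i / i ! * (b ^ j / j !)) • e ^ (i + j)
  calc truncExp e N a * truncExp e N b = ∑ i ∈ range N, ∑ j ∈ range N, f i j := by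
        simp only [truncExp, sum_mul_sum, smul_mul_smul_comm, ← pow_add, f]
    _ = ∑ i ∈ range N, ∑ j ∈ range (N - i), f i j := by
        refine sum_congr rfl fun i _ => (sum_subset (range_subset_range.2 (Nat.sub_le N i))
          fun j _ hj => ?_).symm
        rw [mem_range, not_lt, Nat.sub_le_iff_le_add'] at hj
        simp only [f, pow_eq_zero_of_le hj he, smul_zero]
    _ = ∑ n ∈ range N, ∑ k ∈ range (n + 1), f k (n - k) := (sum_range_diag_flip N f).symm
    _ = truncExp e N (a + b) := by
        refine sum_congr rfl fun n hn => ?_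
        have hn : n < N := mem_range.1 hn
        rw [add_pow_div_factorial a b n fun k hk => hfac k (by omega), sum_smul]
        refine sum_congr rfl fun k hk => ?_
        simp only [f]
        rw [Nat.add_sub_cancel' (Nat.lt_succ_iff.1 (mem_range.1 hk))]

theorem truncExp_mul_truncExp_neg {e : A} {N : ℕ} (he : e ^ N = 0)
    (hfac : ∀ k < N, (k ! : F) ≠ 0) (t : F) :
    truncExp e N t * truncExp e N (-t) = 1 := by
  rcases N.eq_zero_or_pos with rfl | hN
  · have : Subsingleton A := subsingleton_of_zero_eq_one (by simpa using he.symm)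
    exact Subsingleton.elim _ _
  rw [truncExp_mul_truncExp he hfac, add_neg_cancel, truncExp_zero e hN]

end TruncExp

/-- Under the over-restricted condition `e^{⌊(p+1)/2⌋} = 0`, conjugation
`x ↦ Y(t) x Y(-t)` by the truncated exponential `Y(t) = ∑_{k=0}^{p-1} (t^k/k!) e^k`
is an `F`-algebra automorphism of `A`, and it preserves the commutator bracket. -/
theorem truncExp_conj_is_algebra_automorphism {F : Type*} [Field F] (p : ℕ)
    [Fact p.Prime] [CharP F p] {A : Type*} [Ring A] [Algebra F A] (e : A)
    (he : e ^ ((p + 1) / 2) = 0) (t : F) :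
    let Y : F → A := fun s => ∑ k ∈ Finset.range p, (s ^ k / (k.factorial : F)) • e ^ k
    (∃ φ : A ≃ₐ[F] A, ∀ x : A, φ x = Y t * x * Y (-t)) ∧
      ∀ x : A, Y t * (e * x - x * e) * Y (-t) =
        (Y t * e * Y (-t)) * (Y t * x * Y (-t)) -
          (Y t * x * Y (-t)) * (Y t * e * Y (-t)) := by
  intro Y
  have hep : e ^ p = 0 :=
    pow_eq_zero_of_le (Nat.div_le_of_le_mul (by linarith [(Fact.out : p.Prime).two_le])) he
  have hfac : ∀ k < p, (k.factorial : F) ≠ 0 := fun k hk =>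
    ((IsUnit.natCast_factorial_iff_of_charP p).2 hk).ne_zero
  have hinv : ∀ s, Y s * Y (-s) = 1 := truncExp_mul_truncExp_neg hep hfac
  let u : Aˣ := ⟨Y t, Y (-t), hinv t, by simpa only [neg_neg] using hinv (-t)⟩
  let φ : A ≃ₐ[F] A := MulSemiringAction.toAlgEquiv F A (ConjAct.toConjAct u)
  have hφ : ∀ x, φ x = Y t * x * Y (-t) := fun x => ConjAct.units_smul_def _ x
  refine ⟨⟨φ, hφ⟩, fun x => ?_⟩
  simp only [← hφ, map_sub, map_mul]
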